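/- arXiv:2101.11464 — 3 statements merged into one kernel-verified Lean document; each statement's English description precedes it below -/
import Mathlib

section
/- The family {e_α : −S ≤ α ≤ S} is an orthonormal basis of ℂⁿ, and the identity n^{-1/2} Σ_{α=−S}^{S} e_α⊗e_α = n^{-1/2} Σ_{α=−S}^{S} (−1)^{S−α} |α⟩⊗|−α⟩ holds in ℂⁿ⊗ℂⁿ; that is, in the basis {e_α} the vector ψ = n^{-1/2} Σ_α e_α⊗e_α coincides with the SU(2) singlet vector φ = n^{-1/2} Σ_α (−1)^{S−α} |α,−α⟩. -/
open BigOperators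

/-- The index of `-α` when index `i` corresponds to `α = i - S` in `{-S, …, S}`. -/
def revIdx (S : ℕ) (i : Fin (2 * S + 1)) : Fin (2 * S + 1) :=
  ⟨2 * S - (i : ℕ), by omega⟩

/-- The vectors `e_α` of Eq. (takagi_basis): `e_0 = i^S |0⟩`,
`e_α = (i^{S-α}/√2)(|α⟩ + |-α⟩)` and `e_{-α} = (i^{S-α+1}/√2)(|α⟩ - |-α⟩)` for `α > 0`,
where index `i : Fin (2S+1)` corresponds to `α = i - S`. -/
noncomputable def eAlpha (S : ℕ) (i : Fin (2 * S + 1)) : EuclideanSpace ℂ (Fin (2 * S + 1)) :=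
  if (i : ℕ) = S then
    (Complex.I ^ S) • EuclideanSpace.single i 1
  else if S < (i : ℕ) then
    -- α = i - S > 0, exponent S - α = 2S - i
    ((Complex.I ^ (2 * S - (i : ℕ))) / (Real.sqrt 2 : ℂ)) •
      (EuclideanSpace.single i (1 : ℂ) + EuclideanSpace.single (revIdx S i) 1)
  else
    -- α = i - S < 0, i.e. this is e_{-a} with a = S - i > 0; exponent S - a + 1 = i + 1
    ((Complex.I ^ ((i : ℕ) + 1)) / (Real.sqrt 2 : ℂ)) •
      (EuclideanSpace.single (revIdx S i) (1 : ℂ) - EuclideanSpace.single i 1)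

/-- The elementary tensor of two vectors of `ℂⁿ`, as a function on `Fin n × Fin n`. -/
noncomputable def tens {n : ℕ} (v w : EuclideanSpace ℂ (Fin n)) : Fin n × Fin n → ℂ :=
  fun p => v p.1 * w p.2


/-! Each `e_α` is supported on `{|α⟩, |-α⟩}`, so vectors from different pairs `{α, -α}` are
orthogonal. Within a pair (`α > 0`), `e_α = c (u + v) / √2` and `e_{-α} = i c (u - v) / √2`
with `u = |α⟩`, `v = |-α⟩` and `c = i^{S-α}` of modulus one, which are orthonormal; the same
rotation gives `e_α ⊗ e_α + e_{-α} ⊗ e_{-α} = c² (u ⊗ v + v ⊗ u)` with `c² = (-1)^{S-α}`, the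
pair's share of the singlet. Summing over the orbits of the involution `α ↦ -α` gives the
identity. -/

open Complex

local notation "ket" j => EuclideanSpace.single j (1 : ℂ)

lemma Fintype.sum_eq_sum_of_involutive {ι M : Type*} [Fintype ι] [AddCommMonoid M]
    [IsAddTorsionFree M] {σ : ι → ι} (hσ : Function.Involutive σ) {f g : ι → M}
    (h : ∀ i, f i + f (σ i) = g i + g (σ i)) : ∑ i, f i = ∑ i, g i := by
  have hf : ∑ i, f (σ i) = ∑ i, f i := Equiv.sum_comp hσ.toPerm f
  have hg : ∑ i, g (σ i) = ∑ i, g i := Equiv.sum_comp hσ.toPerm g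
  apply IsAddTorsionFree.nsmul_right_injective two_ne_zero
  calc 2 • ∑ i, f i = ∑ i, (f i + f (σ i)) := by rw [Finset.sum_add_distrib, hf, two_nsmul]
    _ = ∑ i, (g i + g (σ i)) := Finset.sum_congr rfl fun i _ => h i
    _ = 2 • ∑ i, g i := by rw [Finset.sum_add_distrib, hg, two_nsmul]

section Pythagoras

variable {E : Type*} [NormedAddCommGroup E] [InnerProductSpace ℂ E] {u v : E}

lemma norm_smul_add_eq_one_of_inner_eq_zero (huv : inner ℂ u v = 0) (hu : ‖u‖ = 1) (hv : ‖v‖ = 1)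
    {c : ℂ} (hc : ‖c‖ = 1) : ‖(c / (Real.sqrt 2 : ℂ)) • (u + v)‖ = 1 := by
  have hsq : ‖u + v‖ * ‖u + v‖ = 2 := by
    rw [norm_add_sq_eq_norm_sq_add_norm_sq_of_inner_eq_zero u v huv, hu, hv]; norm_num
  have hnorm : ‖u + v‖ = Real.sqrt 2 := by
    rw [← hsq, Real.sqrt_mul_self (norm_nonneg _)]
  rw [norm_smul, norm_div, hc, hnorm, Complex.norm_real, Real.norm_eq_abs,
    abs_of_nonneg (Real.sqrt_nonneg 2)]
  field_simp

lemma norm_smul_sub_eq_one_of_inner_eq_zero (huv : inner ℂ u v = 0) (hu : ‖u‖ = 1) (hv : ‖v‖ = 1)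
    {c : ℂ} (hc : ‖c‖ = 1) : ‖(c / (Real.sqrt 2 : ℂ)) • (u - v)‖ = 1 := by
  rw [sub_eq_add_neg]
  exact norm_smul_add_eq_one_of_inner_eq_zero (by simp [huv]) hu (by rw [norm_neg, hv]) hc

lemma inner_smul_add_smul_sub_eq_zero (huv : inner ℂ u v = 0) (h : ‖u‖ = ‖v‖) (a b : ℂ) :
    inner ℂ (a • (u + v)) (b • (u - v)) = 0 := by
  have hvu : inner ℂ v u = 0 := inner_eq_zero_symm.mp huv
  simp only [inner_smul_left, inner_smul_right, inner_add_left, inner_sub_right, huv, hvu,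
    inner_self_eq_norm_sq_to_K, h]
  ring

end Pythagoras

section Tensor

variable {n : ℕ}

lemma tens_smul_smul (a b : ℂ) (v w : EuclideanSpace ℂ (Fin n)) :
    tens (a • v) (b • w) = (a * b) • tens v w := by
  funext p
  simp only [tens, PiLp.smul_apply, smul_eq_mul, Pi.smul_apply]
  ring

lemma tens_smul_add_add_tens_smul_sub (a : ℂ) (u v : EuclideanSpace ℂ (Fin n)) :
    tens (a • (u + v)) (a • (u + v)) + tens ((I * a) • (u - v)) ((I * a) • (u - v)) =
      (2 * a ^ 2) • (tens u v + tens v u) := by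
  funext p
  simp only [tens, Pi.add_apply, Pi.smul_apply, PiLp.smul_apply, PiLp.add_apply, PiLp.sub_apply,
    smul_eq_mul]
  linear_combination (a * (u p.1 - v p.1)) * (a * (u p.2 - v p.2)) * I_sq

end Tensor

section Index

variable {S : ℕ}

@[simp] lemma revIdx_val (i : Fin (2 * S + 1)) : (revIdx S i : ℕ) = 2 * S - i := rfl

lemma revIdx_involutive : Function.Involutive (revIdx S) := by
  intro i
  ext
  simp only [revIdx_val]
  omega

lemma revIdx_eq_self_iff {i : Fin (2 * S + 1)} : revIdx S i = i ↔ (i : ℕ) = S := by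
  rw [Fin.ext_iff, revIdx_val]
  omega

lemma ne_revIdx_of_lt {i : Fin (2 * S + 1)} (h : S < (i : ℕ)) : i ≠ revIdx S i := by
  rw [ne_comm, Ne, revIdx_eq_self_iff]
  omega

lemma revIdx_induction {P : Fin (2 * S + 1) → Prop}
    (center : ∀ i : Fin (2 * S + 1), (i : ℕ) = S → P i)
    (pos : ∀ i : Fin (2 * S + 1), S < (i : ℕ) → P i)
    (neg : ∀ i : Fin (2 * S + 1), S < (i : ℕ) → P (revIdx S i)) (i : Fin (2 * S + 1)) : P i := by
  rcases lt_trichotomy (i : ℕ) S with h | h | h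
  · rw [← revIdx_involutive i]
    exact neg _ (by rw [revIdx_val]; omega)
  · exact center i h
  · exact pos i h

end Index

section Vectors

variable {S : ℕ} {i : Fin (2 * S + 1)}

lemma eAlpha_of_val_eq (h : (i : ℕ) = S) : eAlpha S i = I ^ S • ket i := by
  rw [eAlpha, if_pos h]

lemma eAlpha_of_lt (h : S < (i : ℕ)) :
    eAlpha S i = (I ^ (2 * S - i) / (Real.sqrt 2 : ℂ)) • ((ket i) + ket (revIdx S i)) := by
  rw [eAlpha, if_neg h.ne', if_pos h]

lemma eAlpha_revIdx_of_lt (h : S < (i : ℕ)) :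
    eAlpha S (revIdx S i) =
      (I * (I ^ (2 * S - i) / (Real.sqrt 2 : ℂ))) • ((ket i) - ket (revIdx S i)) := by
  have hi := i.2
  rw [eAlpha, if_neg (by simp; omega), if_neg (by simp; omega), revIdx_involutive i, revIdx_val,
    ← mul_div_assoc, ← pow_succ']

lemma eAlpha_apply_eq_zero {a : Fin (2 * S + 1)} (hi : a ≠ i) (hr : a ≠ revIdx S i) :
    eAlpha S i a = 0 := by
  unfold eAlpha
  split_ifs <;> simp [hi, hr]

end Vectors

section Orthonormal

variable {S : ℕ}

lemma inner_ket_ket_of_ne {n : ℕ} {i j : Fin n} (h : i ≠ j) : inner ℂ (ket i) (ket j) = 0 :=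
  EuclideanSpace.orthonormal_single.2 h

lemma norm_eAlpha (i : Fin (2 * S + 1)) : ‖eAlpha S i‖ = 1 := by
  induction i using revIdx_induction with
  | center i h => rw [eAlpha_of_val_eq h, norm_smul]; simp
  | pos i h =>
    rw [eAlpha_of_lt h]
    exact norm_smul_add_eq_one_of_inner_eq_zero
      (inner_ket_ket_of_ne (ne_revIdx_of_lt h)) (by simp) (by simp)
      (by simp)
  | neg i h =>
    rw [eAlpha_revIdx_of_lt h, ← mul_div_assoc]
    exact norm_smul_sub_eq_one_of_inner_eq_zero
      (inner_ket_ket_of_ne (ne_revIdx_of_lt h)) (by simp) (by simp)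
      (by simp)

lemma inner_eAlpha_eAlpha_revIdx_of_lt {i : Fin (2 * S + 1)} (h : S < (i : ℕ)) :
    inner ℂ (eAlpha S i) (eAlpha S (revIdx S i)) = 0 := by
  rw [eAlpha_of_lt h, eAlpha_revIdx_of_lt h]
  exact inner_smul_add_smul_sub_eq_zero
    (inner_ket_ket_of_ne (ne_revIdx_of_lt h)) (by simp) _ _

lemma inner_eAlpha_eAlpha_revIdx {i : Fin (2 * S + 1)} (h : (i : ℕ) ≠ S) :
    inner ℂ (eAlpha S i) (eAlpha S (revIdx S i)) = 0 := by
  induction i using revIdx_induction with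
  | center i hi => exact absurd hi h
  | pos i hi => exact inner_eAlpha_eAlpha_revIdx_of_lt hi
  | neg i hi =>
    rw [revIdx_involutive i]
    exact inner_eq_zero_symm.mp (inner_eAlpha_eAlpha_revIdx_of_lt hi)

/-- The supports `{i, revIdx S i}` and `{j, revIdx S j}` of the two vectors are disjoint. -/
lemma inner_eAlpha_of_ne_of_ne_revIdx {i j : Fin (2 * S + 1)} (hj : j ≠ i)
    (hj' : j ≠ revIdx S i) : inner ℂ (eAlpha S i) (eAlpha S j) = 0 := by
  rw [PiLp.inner_apply]
  refine Finset.sum_eq_zero fun a _ => ?_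
  by_cases ha : a = i ∨ a = revIdx S i
  · have h1 : a ≠ j := by rintro rfl; tauto
    have h2 : a ≠ revIdx S j := by
      rintro rfl
      rcases ha with h | h
      · exact hj' (by rw [← h, revIdx_involutive])
      · exact hj (revIdx_involutive.injective h)
    simp [eAlpha_apply_eq_zero h1 h2]
  · push Not at ha
    simp [eAlpha_apply_eq_zero ha.1 ha.2]

lemma orthonormal_eAlpha : Orthonormal ℂ (eAlpha S) := by
  refine ⟨norm_eAlpha, fun i j hij => ?_⟩
  by_cases hj : j = revIdx S i
  · subst hj
    exact inner_eAlpha_eAlpha_revIdx (mt revIdx_eq_self_iff.mpr (Ne.symm hij))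
  · exact inner_eAlpha_of_ne_of_ne_revIdx (Ne.symm hij) hj

end Orthonormal

section Singlet

variable {S : ℕ}

noncomputable def singletTerm (S : ℕ) (i : Fin (2 * S + 1)) :
    Fin (2 * S + 1) × Fin (2 * S + 1) → ℂ :=
  (-1 : ℂ) ^ (2 * S - (i : ℕ)) • tens (ket i) (ket (revIdx S i))

lemma two_mul_sq_I_pow_div_sqrt_two (k : ℕ) :
    2 * (I ^ k / (Real.sqrt 2 : ℂ)) ^ 2 = (-1) ^ k := by
  have h2 : ((Real.sqrt 2 : ℂ)) ^ 2 = 2 := by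
    rw [← Complex.ofReal_pow, Real.sq_sqrt zero_le_two, Complex.ofReal_ofNat]
  rw [div_pow, h2, ← pow_mul, mul_comm k, pow_mul, I_sq]
  field_simp

lemma tens_eAlpha_add_tens_eAlpha_revIdx_of_lt {i : Fin (2 * S + 1)} (h : S < (i : ℕ)) :
    tens (eAlpha S i) (eAlpha S i) + tens (eAlpha S (revIdx S i)) (eAlpha S (revIdx S i)) =
      singletTerm S i + singletTerm S (revIdx S i) := by
  have hi := i.2
  have hsign : (-1 : ℂ) ^ (2 * S - (revIdx S i : ℕ)) = (-1) ^ (2 * S - (i : ℕ)) :=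
    neg_one_pow_congr (by rw [revIdx_val, Nat.even_sub (by omega), Nat.even_sub (by omega)]; simp)
  rw [singletTerm, singletTerm, eAlpha_of_lt h, eAlpha_revIdx_of_lt h,
    tens_smul_add_add_tens_smul_sub, two_mul_sq_I_pow_div_sqrt_two, hsign, revIdx_involutive i,
    smul_add]

lemma tens_eAlpha_add_tens_eAlpha_revIdx (i : Fin (2 * S + 1)) :
    tens (eAlpha S i) (eAlpha S i) + tens (eAlpha S (revIdx S i)) (eAlpha S (revIdx S i)) =
      singletTerm S i + singletTerm S (revIdx S i) := by
  induction i using revIdx_induction with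
  | center i h =>
    have hrev : revIdx S i = i := revIdx_eq_self_iff.mpr h
    have hsign : 2 * S - (i : ℕ) = S := by omega
    have hsq :
        tens (eAlpha S i) (eAlpha S i) = (-1 : ℂ) ^ (2 * S - (i : ℕ)) • tens (ket i) (ket i) := by
      rw [eAlpha_of_val_eq h, tens_smul_smul, ← pow_add, ← two_mul, pow_mul, I_sq, hsign]
    simp only [singletTerm, hrev, hsq]
  | pos i h => exact tens_eAlpha_add_tens_eAlpha_revIdx_of_lt h
  | neg i h =>
    rw [revIdx_involutive i, add_comm (tens (eAlpha S (revIdx S i)) _),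
      tens_eAlpha_add_tens_eAlpha_revIdx_of_lt h]
    exact add_comm _ _

end Singlet

theorem eAlpha_orthonormal_basis_and_singlet_general (S : ℕ) :
    Orthonormal ℂ (eAlpha S) ∧
    Submodule.span ℂ (Set.range (eAlpha S)) = ⊤ ∧
    ((Real.sqrt (2 * S + 1) : ℂ))⁻¹ •
        ∑ i : Fin (2 * S + 1), tens (eAlpha S i) (eAlpha S i)
      = ((Real.sqrt (2 * S + 1) : ℂ))⁻¹ •
        ∑ i : Fin (2 * S + 1), ((-1 : ℂ) ^ (2 * S - (i : ℕ))) •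
          tens (EuclideanSpace.single i 1) (EuclideanSpace.single (revIdx S i) 1) := by
  refine ⟨orthonormal_eAlpha, ?_, ?_⟩
  · exact orthonormal_eAlpha.linearIndependent.span_eq_top_of_card_eq_finrank (by simp)
  · congr 1
    exact Fintype.sum_eq_sum_of_involutive revIdx_involutive tens_eAlpha_add_tens_eAlpha_revIdx

/-- `{e_α}` is an orthonormal basis of `ℂⁿ`, and
`n^{-1/2} Σ_α e_α ⊗ e_α = n^{-1/2} Σ_α (-1)^{S-α} |α⟩ ⊗ |-α⟩`. -/
theorem eAlpha_orthonormal_basis_and_singlet (S : ℕ) (hS : 1 ≤ S) :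
    Orthonormal ℂ (eAlpha S) ∧
    Submodule.span ℂ (Set.range (eAlpha S)) = ⊤ ∧
    ((Real.sqrt (2 * S + 1) : ℂ))⁻¹ •
        ∑ i : Fin (2 * S + 1), tens (eAlpha S i) (eAlpha S i)
      = ((Real.sqrt (2 * S + 1) : ℂ))⁻¹ •
        ∑ i : Fin (2 * S + 1), ((-1 : ℂ) ^ (2 * S - (i : ℕ))) •
          tens (EuclideanSpace.single i 1) (EuclideanSpace.single (revIdx S i) 1) :=
  eAlpha_orthonormal_basis_and_singlet_general S
end

section
/- Suppose u ≤ 0 ≤ v and let H = Σ_{x=−ℓ+1}^{ℓ−1} (u T_{x,x+1} + v Q_{x,x+1}) on (ℂⁿ)^{⊗2ℓ}. Then: (i) H ≥ (2ℓ−1)u·I in the sense of quadratic forms; (ii) for every unit vector φ = Σ_α c_α e_α ∈ ℂⁿ with Σ_{α=1}^n c_α² = 0, the product state φ^{⊗2ℓ} satisfies H φ^{⊗2ℓ} = (2ℓ−1)u · φ^{⊗2ℓ} (and such φ exists for every n ≥ 2, e.g. c = (1, i, 0, …, 0)/√2). In particular (2ℓ−1)u is the smallest eigenvalue of H. -/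
open Matrix BigOperators

/-- The transposition operator `T` on `ℂⁿ ⊗ ℂⁿ`, determined by `T (φ ⊗ χ) = χ ⊗ φ`. -/
noncomputable def transOp (n : ℕ) : Matrix (Fin n × Fin n) (Fin n × Fin n) ℂ :=
  fun p q => if p.1 = q.2 ∧ p.2 = q.1 then 1 else 0

/-- The maximally entangled vector `ψ = n^{-1/2} Σ_α e_α ⊗ e_α`. -/
noncomputable def psiVec (n : ℕ) : Fin n × Fin n → ℂ :=
  fun p => if p.1 = p.2 then ((Real.sqrt n : ℂ))⁻¹ else 0

/-- The orthogonal projection `Q = |ψ⟩⟨ψ|` onto the span of `ψ`. -/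
noncomputable def QOp (n : ℕ) : Matrix (Fin n × Fin n) (Fin n × Fin n) ℂ :=
  fun p q => psiVec n p * (starRingEnd ℂ) (psiVec n q)

/-- A two-body operator `A` acting on the tensor factors at positions `p, q` of the chain
`(ℂⁿ)^{⊗ 2ℓ}`, and as the identity on all other factors. Configurations `Fin (2ℓ) → Fin n`
index the product basis of `(ℂⁿ)^{⊗ 2ℓ}`. -/
noncomputable def bondOp (n ℓ : ℕ) (A : Matrix (Fin n × Fin n) (Fin n × Fin n) ℂ)
    (p q : Fin (2 * ℓ)) :
    Matrix ((Fin (2 * ℓ)) → Fin n) ((Fin (2 * ℓ)) → Fin n) ℂ :=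
  fun σ τ => A (σ p, σ q) (τ p, τ q) *
    ∏ y ∈ (Finset.univ.erase p).erase q, (if σ y = τ y then (1 : ℂ) else 0)

/-- The chain Hamiltonian `Σ_{x=-ℓ+1}^{ℓ-1} A_{x,x+1}` on `(ℂⁿ)^{⊗ 2ℓ}`, where sites
`-ℓ+1, …, ℓ` are encoded as positions `0, …, 2ℓ-1`. -/
noncomputable def chainH (n ℓ : ℕ) (A : Matrix (Fin n × Fin n) (Fin n × Fin n) ℂ) :
    Matrix ((Fin (2 * ℓ)) → Fin n) ((Fin (2 * ℓ)) → Fin n) ℂ :=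
  ∑ x ∈ Finset.range (2 * ℓ - 1),
    if h : x + 1 < 2 * ℓ then bondOp n ℓ A ⟨x, by omega⟩ ⟨x + 1, h⟩ else 0

/-- The product state `φ^{⊗ 2ℓ}` with `φ = Σ_α c_α e_α`. -/
noncomputable def prodState (n ℓ : ℕ) (c : Fin n → ℂ) : ((Fin (2 * ℓ)) → Fin n) → ℂ :=
  fun σ => ∏ x : Fin (2 * ℓ), c (σ x)

/-!
Each bond term `h = uT + vQ` satisfies `h ≥ u`: the swap `T` is a self-adjoint involution, so
`1 - T = (1 - T)ᴴ (1 - T) / 2 ≥ 0`, and `Q ≥ 0`, whence `h - u = (-u)(1 - T) + vQ ≥ 0`. Up to a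
reindexing of configurations, `h_{x,x+1}` is the Kronecker product `h ⊗ 1`, so each bond of the
chain is `≥ u` and `H ≥ (2ℓ - 1)u`. On a product vector `φ ⊗ φ`, `T` acts trivially and `Q` vanishes
because `⟨ψ, φ ⊗ φ⟩ = n^{-1/2} Σ c_α² = 0`; hence every bond acts on `φ^{⊗2ℓ}` as `u`.
-/

open scoped Kronecker ComplexOrder

lemma prod_eq_mul_mul_prod_ne {ι M : Type*} [Fintype ι] [DecidableEq ι] [CommMonoid M]
    (f : ι → M) {p q : ι} (hpq : p ≠ q) :
    ∏ y, f y = f p * f q * ∏ y : {y : ι // y ≠ p ∧ y ≠ q}, f y := by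
  rw [← Finset.mul_prod_erase _ _ (Finset.mem_univ p),
    ← Finset.mul_prod_erase _ _ (Finset.mem_erase.mpr ⟨hpq.symm, Finset.mem_univ q⟩),
    Finset.prod_subtype (p := fun y => y ≠ p ∧ y ≠ q) _ (fun y => by simp [and_comm]), mul_assoc]

lemma Matrix.kronecker_one_mulVec {m k R : Type*} [Fintype m] [Fintype k] [DecidableEq k]
    [CommSemiring R] (A : Matrix m m R) (x : m → R) (y : k → R) :
    (A ⊗ₖ (1 : Matrix k k R)) *ᵥ (fun i => x i.1 * y i.2) = fun i => (A *ᵥ x) i.1 * y i.2 := by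
  ext ⟨i, j⟩
  simp [mulVec, dotProduct, Fintype.sum_prod_type, one_apply, Finset.sum_mul, mul_assoc]

def pairSplitEquiv {ι α : Type*} [DecidableEq ι] {p q : ι} (hpq : p ≠ q) :
    (ι → α) ≃ (α × α) × ({y : ι // y ≠ p ∧ y ≠ q} → α) where
  toFun σ := ((σ p, σ q), fun y => σ y)
  invFun x y := if h₁ : y = p then x.1.1 else if h₂ : y = q then x.1.2 else x.2 ⟨y, h₁, h₂⟩
  left_inv σ := by
    funext y
    by_cases h₁ : y = p
    · simp [h₁]
    · by_cases h₂ : y = q <;> simp [h₁, h₂, hpq.symm]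
  right_inv x := by
    obtain ⟨⟨a, b⟩, g⟩ := x
    ext y
    · simp
    · simp [hpq.symm]
    · obtain ⟨y, h₁, h₂⟩ := y; simp [h₁, h₂]

section Spectrum

variable {ι : Type*} [Fintype ι] [DecidableEq ι] {M : Matrix ι ι ℂ} {r : ℝ}

lemma Matrix.PosSemidef.mul_re_le_re_dotProduct_mulVec (hM : (M - (r : ℂ) • 1).PosSemidef)
    (w : ι → ℂ) : r * (star w ⬝ᵥ w).re ≤ (star w ⬝ᵥ (M *ᵥ w)).re := by
  have h := (Complex.nonneg_iff.mp (hM.dotProduct_mulVec_nonneg w)).1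
  rw [sub_mulVec, smul_mulVec, one_mulVec, dotProduct_sub, dotProduct_smul, smul_eq_mul,
    Complex.sub_re, Complex.re_ofReal_mul] at h
  linarith

lemma Matrix.PosSemidef.le_re_of_mulVec_eq_smul (hM : (M - (r : ℂ) • 1).PosSemidef)
    {w : ι → ℂ} (hw : w ≠ 0) {μ : ℂ} (hμ : M *ᵥ w = μ • w) : r ≤ μ.re := by
  have h := hM.mul_re_le_re_dotProduct_mulVec w
  obtain ⟨hre, him⟩ := Complex.lt_def.mp (dotProduct_star_self_pos_iff.mpr hw)
  rw [hμ, dotProduct_smul, smul_eq_mul, Complex.mul_re, ← him, Complex.zero_im, mul_zero,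
    sub_zero] at h
  rw [Complex.zero_re] at hre
  exact le_of_mul_le_mul_right h hre

end Spectrum

lemma exists_sum_norm_sq_eq_one_sum_sq_eq_zero {ι : Type*} [Fintype ι] {i j : ι} (hij : i ≠ j) :
    ∃ c : ι → ℂ, ∑ α, ‖c α‖ ^ 2 = 1 ∧ ∑ α, c α ^ 2 = 0 := by
  classical
  set a : ℂ := (((Real.sqrt 2)⁻¹ : ℝ) : ℂ)
  let c : ι → ℂ := fun α => if α = i then a else if α = j then a * Complex.I else 0
  have hc : ∀ α, α ≠ i ∧ α ≠ j → c α = 0 := fun α hα => by simp [c, hα.1, hα.2]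
  refine ⟨c, ?_, ?_⟩
  · rw [Fintype.sum_eq_add i j hij fun α hα => by simp [hc α hα]]
    simp [c, hij.symm, a]
    norm_num
  · rw [Fintype.sum_eq_add i j hij fun α hα => by simp [hc α hα]]
    simp [c, hij.symm, mul_pow]

section TwoSite

variable {n : ℕ}

lemma transOp_conjTranspose : (transOp n)ᴴ = transOp n := by
  ext p q
  simp only [conjTranspose_apply, transOp]
  split_ifs <;> simp_all [eq_comm]

lemma transOp_mul_self : transOp n * transOp n = 1 := by
  ext ⟨a, b⟩ ⟨c, d⟩
  simp [transOp, mul_apply, one_apply, Prod.ext_iff, Fintype.sum_prod_type, ite_and]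

lemma posSemidef_one_sub_transOp : (1 - transOp n).PosSemidef := by
  have h : (1 - transOp n)ᴴ * (1 - transOp n) = (2 : ℂ) • (1 - transOp n) := by
    rw [conjTranspose_sub, conjTranspose_one, transOp_conjTranspose, sub_mul, mul_sub, mul_sub,
      transOp_mul_self, one_mul, mul_one, one_mul, two_smul]
    abel
  have h2 : 1 - transOp n = ((2⁻¹ : ℝ) : ℂ) • ((1 - transOp n)ᴴ * (1 - transOp n)) := by
    rw [h, smul_smul]; norm_num
  rw [h2]
  exact (posSemidef_conjTranspose_mul_self _).smul (Complex.zero_le_real.mpr (by norm_num))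

lemma posSemidef_QOp : (QOp n).PosSemidef :=
  posSemidef_vecMulVec_self_star (psiVec n)

lemma posSemidef_transOp_QOp_sub_smul_one {u v : ℝ} (hu : u ≤ 0) (hv : 0 ≤ v) :
    ((u : ℂ) • transOp n + (v : ℂ) • QOp n - (u : ℂ) • 1).PosSemidef := by
  have h : (u : ℂ) • transOp n + (v : ℂ) • QOp n - (u : ℂ) • 1
      = ((-u : ℝ) : ℂ) • (1 - transOp n) + (v : ℂ) • QOp n := by
    rw [Complex.ofReal_neg, smul_sub, neg_smul, neg_smul]; abel
  rw [h]
  exact (posSemidef_one_sub_transOp.smul (Complex.zero_le_real.mpr (by linarith))).add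
    (posSemidef_QOp.smul (Complex.zero_le_real.mpr hv))

lemma transOp_mulVec (x : Fin n × Fin n → ℂ) : transOp n *ᵥ x = x ∘ Prod.swap := by
  ext ⟨a, b⟩
  simp [transOp, mulVec, dotProduct, Fintype.sum_prod_type, ite_and]

lemma QOp_eq_vecMulVec : QOp n = vecMulVec (psiVec n) (star (psiVec n)) := rfl

lemma QOp_mulVec (x : Fin n × Fin n → ℂ) : QOp n *ᵥ x = (star (psiVec n) ⬝ᵥ x) • psiVec n := by
  rw [QOp_eq_vecMulVec, vecMulVec_mulVec, op_smul_eq_smul]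

lemma transOp_mulVec_tmul_self (c : Fin n → ℂ) :
    transOp n *ᵥ (fun p => c p.1 * c p.2) = fun p => c p.1 * c p.2 := by
  rw [transOp_mulVec]
  ext p
  exact mul_comm _ _

lemma QOp_mulVec_tmul_self {c : Fin n → ℂ} (hc : ∑ α, c α ^ 2 = 0) :
    QOp n *ᵥ (fun p => c p.1 * c p.2) = 0 := by
  rw [QOp_mulVec]
  have hψ : star (psiVec n) ⬝ᵥ (fun p => c p.1 * c p.2)
      = star ((Real.sqrt n : ℂ))⁻¹ * ∑ α, c α ^ 2 := by
    simp [psiVec, dotProduct, Fintype.sum_prod_type, Finset.mul_sum, sq, apply_ite, ite_mul]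
  rw [hψ, hc, mul_zero, zero_smul]

lemma transOp_QOp_mulVec_tmul_self (u v : ℝ) {c : Fin n → ℂ} (hc : ∑ α, c α ^ 2 = 0) :
    ((u : ℂ) • transOp n + (v : ℂ) • QOp n) *ᵥ (fun x => c x.1 * c x.2)
      = (u : ℂ) • fun x => c x.1 * c x.2 := by
  rw [add_mulVec, smul_mulVec, smul_mulVec, transOp_mulVec_tmul_self, QOp_mulVec_tmul_self hc,
    smul_zero, add_zero]

end TwoSite

section Bond

variable {n ℓ : ℕ} {p q : Fin (2 * ℓ)}

lemma bondOp_eq_submatrix_kronecker (A : Matrix (Fin n × Fin n) (Fin n × Fin n) ℂ)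
    (hpq : p ≠ q) :
    bondOp n ℓ A p q = (A ⊗ₖ (1 : Matrix ({y // y ≠ p ∧ y ≠ q} → Fin n) _ ℂ)).submatrix
      (pairSplitEquiv hpq) (pairSplitEquiv hpq) := by
  ext σ τ
  simp [bondOp, pairSplitEquiv, one_apply, Finset.prod_boole, funext_iff, and_comm]

lemma posSemidef_bondOp_sub_smul_one {A : Matrix (Fin n × Fin n) (Fin n × Fin n) ℂ} {r : ℂ}
    (hA : (A - r • 1).PosSemidef) (hpq : p ≠ q) :
    (bondOp n ℓ A p q - r • 1).PosSemidef := by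
  obtain ⟨B, rfl⟩ : ∃ B, A = B + r • 1 := ⟨A - r • 1, by abel⟩
  rw [add_sub_cancel_right] at hA
  simp only [bondOp_eq_submatrix_kronecker _ hpq, add_kronecker, smul_kronecker,
    one_kronecker_one, submatrix_add, submatrix_smul, Pi.add_apply, Pi.smul_apply,
    submatrix_one_equiv, add_sub_cancel_right]
  exact (hA.kronecker .one).submatrix _

lemma bondOp_mulVec_prodState {A : Matrix (Fin n × Fin n) (Fin n × Fin n) ℂ} {c : Fin n → ℂ}
    {r : ℂ}
    (hA : A *ᵥ (fun x => c x.1 * c x.2) = r • fun x => c x.1 * c x.2) (hpq : p ≠ q) :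
    bondOp n ℓ A p q *ᵥ prodState n ℓ c = r • prodState n ℓ c := by
  have hsplit : prodState n ℓ c ∘ (pairSplitEquiv hpq).symm
      = fun x => (c x.1.1 * c x.1.2) * ∏ y, c (x.2 y) := by
    ext ⟨⟨a, b⟩, g⟩
    rw [Function.comp_apply, prodState, prod_eq_mul_mul_prod_ne _ hpq]
    simp only [pairSplitEquiv, Equiv.coe_fn_symm_mk, dif_pos, dif_neg hpq.symm]
    congr 1
    exact Fintype.prod_congr _ _ fun y => by simp [y.2.1, y.2.2]
  rw [bondOp_eq_submatrix_kronecker A hpq, submatrix_mulVec_equiv, hsplit,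
    kronecker_one_mulVec A (fun x : Fin n × Fin n => c x.1 * c x.2)
      (fun g : {y // y ≠ p ∧ y ≠ q} → Fin n => ∏ y, c (g y)), hA]
  ext σ
  have hσ := congrFun hsplit (pairSplitEquiv hpq σ)
  simp only [Function.comp_apply, Equiv.symm_apply_apply] at hσ
  simp only [Function.comp_apply, Pi.smul_apply, smul_eq_mul, hσ, mul_assoc]

end Bond

section Chain

variable {n ℓ : ℕ} {A : Matrix (Fin n × Fin n) (Fin n × Fin n) ℂ} {r : ℝ}

lemma posSemidef_chainH_sub_smul_one (hA : (A - (r : ℂ) • 1).PosSemidef) :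
    (chainH n ℓ A - ((((2 * ℓ - 1 : ℕ) : ℝ) * r : ℝ) : ℂ) • 1).PosSemidef := by
  have hsplit : chainH n ℓ A - ((((2 * ℓ - 1 : ℕ) : ℝ) * r : ℝ) : ℂ) • 1
      = ∑ x ∈ Finset.range (2 * ℓ - 1),
          ((if h : x + 1 < 2 * ℓ then bondOp n ℓ A ⟨x, by omega⟩ ⟨x + 1, h⟩ else 0)
            - (r : ℂ) • 1) := by
    rw [Finset.sum_sub_distrib, Finset.sum_const, Finset.card_range, chainH,
      ← Nat.cast_smul_eq_nsmul ℂ, smul_smul]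
    push_cast
    rfl
  rw [hsplit]
  refine posSemidef_sum _ fun x hx => ?_
  have h : x + 1 < 2 * ℓ := by rw [Finset.mem_range] at hx; omega
  rw [dif_pos h]
  exact posSemidef_bondOp_sub_smul_one hA (by simp [Fin.ext_iff])

lemma chainH_mulVec_prodState {c : Fin n → ℂ}
    (hA : A *ᵥ (fun x => c x.1 * c x.2) = (r : ℂ) • fun x => c x.1 * c x.2) :
    chainH n ℓ A *ᵥ prodState n ℓ c
      = ((((2 * ℓ - 1 : ℕ) : ℝ) * r : ℝ) : ℂ) • prodState n ℓ c := by
  have hbond : ∀ x ∈ Finset.range (2 * ℓ - 1),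
      (if h : x + 1 < 2 * ℓ then bondOp n ℓ A ⟨x, by omega⟩ ⟨x + 1, h⟩ else 0)
          *ᵥ prodState n ℓ c = (r : ℂ) • prodState n ℓ c := by
    intro x hx
    have h : x + 1 < 2 * ℓ := by rw [Finset.mem_range] at hx; omega
    rw [dif_pos h]
    exact bondOp_mulVec_prodState hA (by simp [Fin.ext_iff])
  rw [chainH, sum_mulVec, Finset.sum_congr rfl hbond, Finset.sum_const, Finset.card_range,
    ← Nat.cast_smul_eq_nsmul ℂ, smul_smul]
  push_cast
  rfl

end Chain

lemma prodState_ne_zero {n ℓ : ℕ} {c : Fin n → ℂ} (hc : c ≠ 0) : prodState n ℓ c ≠ 0 := by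
  obtain ⟨α, hα⟩ := Function.ne_iff.mp hc
  intro h
  have hconst := congrFun h fun _ => α
  simp only [prodState, Pi.zero_apply, Finset.prod_const, Finset.card_univ, Fintype.card_fin,
    pow_eq_zero_iff', ne_eq] at hconst
  exact hα hconst.1

theorem ferromagnetic_ground_states_general (n ℓ : ℕ) (hn : 2 ≤ n)
    (u v : ℝ) (hu : u ≤ 0) (hv : 0 ≤ v) :
    (∀ w : ((Fin (2 * ℓ)) → Fin n) → ℂ,
      ((2 * ℓ - 1 : ℕ) : ℝ) * u * (star w ⬝ᵥ w).re ≤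
        (star w ⬝ᵥ (chainH n ℓ ((u : ℂ) • transOp n + (v : ℂ) • QOp n) *ᵥ w)).re) ∧
    (∀ c : Fin n → ℂ, ∑ α, ‖c α‖ ^ 2 = 1 → ∑ α, c α ^ 2 = 0 →
      chainH n ℓ ((u : ℂ) • transOp n + (v : ℂ) • QOp n) *ᵥ prodState n ℓ c
        = ((((2 * ℓ - 1 : ℕ) : ℝ) * u : ℝ) : ℂ) • prodState n ℓ c) ∧
    (∃ c : Fin n → ℂ, ∑ α, ‖c α‖ ^ 2 = 1 ∧ ∑ α, c α ^ 2 = 0) ∧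
    (∃ w : ((Fin (2 * ℓ)) → Fin n) → ℂ, w ≠ 0 ∧
      chainH n ℓ ((u : ℂ) • transOp n + (v : ℂ) • QOp n) *ᵥ w
        = ((((2 * ℓ - 1 : ℕ) : ℝ) * u : ℝ) : ℂ) • w) ∧
    (∀ μ : ℂ, (∃ w : ((Fin (2 * ℓ)) → Fin n) → ℂ, w ≠ 0 ∧
        chainH n ℓ ((u : ℂ) • transOp n + (v : ℂ) • QOp n) *ᵥ w = μ • w) →
      ((2 * ℓ - 1 : ℕ) : ℝ) * u ≤ μ.re) := by
  have hH := posSemidef_chainH_sub_smul_one (ℓ := ℓ)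
    (posSemidef_transOp_QOp_sub_smul_one (n := n) hu hv)
  have hground : ∀ c : Fin n → ℂ, ∑ α, c α ^ 2 = 0 →
      chainH n ℓ ((u : ℂ) • transOp n + (v : ℂ) • QOp n) *ᵥ prodState n ℓ c
        = ((((2 * ℓ - 1 : ℕ) : ℝ) * u : ℝ) : ℂ) • prodState n ℓ c :=
    fun c hc => chainH_mulVec_prodState (transOp_QOp_mulVec_tmul_self u v hc)
  obtain ⟨c, hc_unit, hc_iso⟩ := exists_sum_norm_sq_eq_one_sum_sq_eq_zero
    (i := (⟨0, by omega⟩ : Fin n)) (j := ⟨1, by omega⟩) (by simp [Fin.ext_iff])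
  have hc_ne : c ≠ 0 := by rintro rfl; simp at hc_unit
  exact ⟨hH.mul_re_le_re_dotProduct_mulVec, fun c _ hc => hground c hc, ⟨c, hc_unit, hc_iso⟩,
    ⟨prodState n ℓ c, prodState_ne_zero hc_ne, hground c hc_iso⟩,
    fun μ ⟨_, hw, hμ⟩ => hH.le_re_of_mulVec_eq_smul hw hμ⟩

/-- For `u ≤ 0 ≤ v`: the chain Hamiltonian `H = Σ (uT + vQ)_{x,x+1}` satisfies
`H ≥ (2ℓ-1)u` as quadratic forms; product states built from `c` with `Σ c_α² = 0` are
eigenstates with eigenvalue `(2ℓ-1)u` (and such `c` exist); hence `(2ℓ-1)u` is the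
smallest eigenvalue of `H`. -/
theorem ferromagnetic_ground_states (n ℓ : ℕ) (hn : 2 ≤ n) (hℓ : 1 ≤ ℓ)
    (u v : ℝ) (hu : u ≤ 0) (hv : 0 ≤ v) :
    (∀ w : ((Fin (2 * ℓ)) → Fin n) → ℂ,
      ((2 * ℓ - 1 : ℕ) : ℝ) * u * (star w ⬝ᵥ w).re ≤
        (star w ⬝ᵥ (chainH n ℓ ((u : ℂ) • transOp n + (v : ℂ) • QOp n) *ᵥ w)).re) ∧
    (∀ c : Fin n → ℂ, ∑ α, ‖c α‖ ^ 2 = 1 → ∑ α, c α ^ 2 = 0 →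
      chainH n ℓ ((u : ℂ) • transOp n + (v : ℂ) • QOp n) *ᵥ prodState n ℓ c
        = ((((2 * ℓ - 1 : ℕ) : ℝ) * u : ℝ) : ℂ) • prodState n ℓ c) ∧
    (∃ c : Fin n → ℂ, ∑ α, ‖c α‖ ^ 2 = 1 ∧ ∑ α, c α ^ 2 = 0) ∧
    (∃ w : ((Fin (2 * ℓ)) → Fin n) → ℂ, w ≠ 0 ∧
      chainH n ℓ ((u : ℂ) • transOp n + (v : ℂ) • QOp n) *ᵥ w
        = ((((2 * ℓ - 1 : ℕ) : ℝ) * u : ℝ) : ℂ) • w) ∧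
    (∀ μ : ℂ, (∃ w : ((Fin (2 * ℓ)) → Fin n) → ℂ, w ≠ 0 ∧
        chainH n ℓ ((u : ℂ) • transOp n + (v : ℂ) • QOp n) *ᵥ w = μ • w) →
      ((2 * ℓ - 1 : ℕ) : ℝ) * u ≤ μ.re) :=
  ferromagnetic_ground_states_general n ℓ hn u v hu hv
end

section
/- Let u ∈ ℝ, v < 0, ℓ ≥ 1, and H = Σ_{x=−ℓ+1}^{ℓ−1} (u T_{x,x+1} + v Q_{x,x+1}) on (ℂⁿ)^{⊗2ℓ}. For ε ∈ [0,1] define φ_ε = √(1−ε²) e_n⊗e_n + (ε/√(n−1)) Σ_{α=1}^{n−1} e_α⊗e_α ∈ ℂⁿ⊗ℂⁿ, and let Φ_ε ∈ (ℂⁿ)^{⊗2ℓ} be the fully dimerized product state obtained by placing a copy of φ_ε on each of the ℓ disjoint pairs of sites (−ℓ+1,−ℓ+2), (−ℓ+3,−ℓ+4), …, (ℓ−1,ℓ). Then there exists ε ∈ (0,1) such that ⟨Φ_ε, H Φ_ε⟩ < (2ℓ−1)(u + v/n). -/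
open Matrix BigOperators

/-- The partially dimerized pair state
`φ_ε = √(1-ε²) e_n ⊗ e_n + (ε/√(n-1)) Σ_{α=1}^{n-1} e_α ⊗ e_α` (the last basis index
plays the role of `α = n`). -/
noncomputable def pairState (n : ℕ) (hn : 2 ≤ n) (ε : ℝ) : Fin n × Fin n → ℂ :=
  fun p =>
    if p.1 = (⟨n - 1, by omega⟩ : Fin n) ∧ p.2 = (⟨n - 1, by omega⟩ : Fin n) then
      ((Real.sqrt (1 - ε ^ 2) : ℝ) : ℂ)
    else if p.1 = p.2 then ((ε : ℂ) / (Real.sqrt (n - 1) : ℂ))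
    else 0

/-- The fully dimerized product state: a copy of `φ_ε` on each pair of positions
`(2k, 2k+1)`, `k = 0, …, ℓ-1`. -/
noncomputable def dimerState (n ℓ : ℕ) (hn : 2 ≤ n) (ε : ℝ) :
    ((Fin (2 * ℓ)) → Fin n) → ℂ :=
  fun σ => ∏ k ∈ Finset.range ℓ,
    if h : 2 * k + 1 < 2 * ℓ then
      pairState n hn ε (σ ⟨2 * k, by omega⟩, σ ⟨2 * k + 1, h⟩)
    else 1

/-!
Since `φ_ε = Σ_a w_a e_a ⊗ e_a` is diagonal, `Φ_ε` is the superposition, with weights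
`∏_k w_{α_k}`, of the configurations that take a constant value `α_k` on the `k`-th dimer.
With `Σ w² = 1`, a bond inside a dimer contributes `⟨φ_ε, (uT + vQ) φ_ε⟩ = u + (v/n)(Σ w)²`,
while a bond joining two dimers sees two independent sites in the state `diag(w²)` and contributes
`(u + v/n) Σ w⁴`. Hence
`⟨Φ_ε, H Φ_ε⟩ = ℓ (u + (v/n)(√(1-ε²) + √(n-1) ε)²) + (ℓ-1)(u + v/n)((1-ε²)² + ε⁴/(n-1))`.
Compared with `(2ℓ-1)(u + v/n)`, the `ℓ` intra-dimer bonds gain at least `ℓ (|v|/n) √(n-1) ε`,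
while the inter-dimer bonds lose only `O(ε²)`; so every small enough `ε` works.
-/

section QuadraticForm

variable {ι κ R : Type*} [Fintype ι] [Fintype κ] [DecidableEq ι] [CommSemiring R]

lemma dotProduct_eq_sum_of_eq_sum_ite (g : κ → ι) (c : κ → R) {Φ : ι → R}
    (hΦ : ∀ σ, Φ σ = ∑ α, c α * if σ = g α then 1 else 0) (w : ι → R) :
    w ⬝ᵥ Φ = ∑ α, w (g α) * c α := by
  simp only [dotProduct, hΦ, Finset.mul_sum, mul_ite, mul_one, mul_zero]
  rw [Finset.sum_comm]
  simp [mul_comm]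

lemma star_dotProduct_mulVec_eq_sum_of_eq_sum_ite [StarRing R] (M : Matrix ι ι R) (g : κ → ι)
    (c : κ → R) {Φ : ι → R} (hΦ : ∀ σ, Φ σ = ∑ α, c α * if σ = g α then 1 else 0) :
    star Φ ⬝ᵥ M *ᵥ Φ = ∑ α, ∑ β, star (c α) * M (g α) (g β) * c β := by
  have hstar : ∀ σ, star Φ σ = ∑ α, star (c α) * if σ = g α then 1 else 0 := fun σ => by
    simp [hΦ, star_sum, apply_ite star, mul_comm]
  rw [dotProduct_comm, dotProduct_eq_sum_of_eq_sum_ite g _ hstar]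
  simp only [mulVec, dotProduct_eq_sum_of_eq_sum_ite g c hΦ, Finset.sum_mul]
  refine Finset.sum_congr rfl fun α _ => Finset.sum_congr rfl fun β _ => ?_
  ring

end QuadraticForm

section ProductSums

variable {ι X R : Type*} [Fintype ι] [DecidableEq ι] [Fintype X] [CommSemiring R]

lemma sum_sum_prod_eq_prod_sum_sum (G : ι → X → X → R) :
    ∑ α : ι → X, ∑ β : ι → X, ∏ j, G j (α j) (β j) = ∏ j, ∑ a, ∑ b, G j a b := by
  simp only [Fintype.prod_sum]

lemma sum_prod_mul_ite_eq_mul_ite_eq [DecidableEq X] (c : X → R) (hc : ∑ a, c a = 1) {k k' : ι}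
    (hkk' : k ≠ k') (a b : X) :
    ∑ α : ι → X, (∏ j, c (α j)) * ((if α k = a then 1 else 0) * (if α k' = b then 1 else 0)) =
      c a * c b := by
  have hsite : ∀ j, ∑ x, c x * (if j = k then (if x = a then 1 else 0) else 1) *
      (if j = k' then (if x = b then 1 else 0) else 1) =
      (if j = k then c a else 1) * (if j = k' then c b else 1) := fun j => by
    by_cases hj : j = k
    · simp [hj, hkk']
    · by_cases hj' : j = k' <;> simp [hj, hj', hc, Ne.symm hkk']
  rw [← Fintype.prod_ite_eq' k (fun _ => c a), ← Fintype.prod_ite_eq' k' (fun _ => c b),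
    ← Finset.prod_mul_distrib, ← Finset.prod_congr rfl fun j _ => hsite j, Fintype.prod_sum]
  refine Finset.sum_congr rfl fun α _ => ?_
  rw [Finset.prod_mul_distrib, Finset.prod_mul_distrib, Fintype.prod_ite_eq' k,
    Fintype.prod_ite_eq' k', mul_assoc]

lemma sum_prod_mul_apply_apply [DecidableEq X] (c : X → R) (hc : ∑ a, c a = 1) {k k' : ι}
    (hkk' : k ≠ k') (F : X → X → R) :
    ∑ α : ι → X, (∏ j, c (α j)) * F (α k) (α k') = ∑ a, ∑ b, c a * c b * F a b := by
  have hF : ∀ α : ι → X, F (α k) (α k') = ∑ a, ∑ b, F a b *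
      ((if α k = a then 1 else 0) * (if α k' = b then 1 else 0)) := fun α => by
    simp [mul_ite]
  simp only [hF, Finset.mul_sum]
  rw [Finset.sum_comm]
  refine Finset.sum_congr rfl fun a _ => ?_
  rw [Finset.sum_comm]
  refine Finset.sum_congr rfl fun b _ => ?_
  rw [← sum_prod_mul_ite_eq_mul_ite_eq c hc hkk' a b, Finset.sum_mul]
  refine Finset.sum_congr rfl fun α _ => ?_
  ring

end ProductSums

lemma sum_range_ite_mod_two {M : Type*} [AddCommMonoid M] (m : ℕ) (I J : M) :
    ∑ x ∈ Finset.range (2 * m + 1), (if x % 2 = 0 then I else J) = (m + 1) • I + m • J := by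
  induction m with
  | zero => simp
  | succ m ih =>
    rw [show 2 * (m + 1) + 1 = 2 * m + 1 + 1 + 1 by ring, Finset.sum_range_succ,
      Finset.sum_range_succ, ih, if_neg (by omega), if_pos (by omega)]
    simp only [add_nsmul, one_nsmul]
    abel

lemma one_add_mul_le_sq_sqrt_one_sub_sq_add {ε a : ℝ} (hε0 : 0 ≤ ε) (hε : ε ≤ 1 / 2)
    (ha0 : 0 ≤ a) (ha : 1 ≤ a ^ 2) : 1 + a * ε ≤ (√(1 - ε ^ 2) + a * ε) ^ 2 := by
  have hc : √(1 - ε ^ 2) ^ 2 = 1 - ε ^ 2 := Real.sq_sqrt (by nlinarith)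
  have hc_half : 1 / 2 ≤ √(1 - ε ^ 2) := by nlinarith [Real.sqrt_nonneg (1 - ε ^ 2)]
  nlinarith [mul_nonneg (mul_nonneg ha0 hε0) (by linarith : 0 ≤ 2 * √(1 - ε ^ 2) - 1),
    mul_nonneg (by linarith : 0 ≤ a ^ 2 - 1) (sq_nonneg ε)]

lemma abs_sq_one_sub_sq_add_div_sub_one_le {ε m : ℝ} (hε : ε ^ 2 ≤ 1) (hm : 1 ≤ m) :
    |(1 - ε ^ 2) ^ 2 + ε ^ 4 / m - 1| ≤ 2 * ε ^ 2 := by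
  have hdiv : ε ^ 4 / m ≤ ε ^ 4 := div_le_self (by positivity) hm
  have h4 : ε ^ 4 ≤ ε ^ 2 := by nlinarith [sq_nonneg ε]
  rw [abs_le]
  constructor <;> nlinarith [div_nonneg (by positivity : (0 : ℝ) ≤ ε ^ 4) (by linarith : 0 ≤ m)]

lemma exists_pos_le_half_mul_lt {A : ℝ} (hA : 0 < A) {B : ℝ} (hB : 0 ≤ B) :
    ∃ ε : ℝ, 0 < ε ∧ ε ≤ 1 / 2 ∧ B * ε < A := by
  refine ⟨min (1 / 2) (A / (B + 1)), lt_min (by norm_num) (by positivity), min_le_left _ _, ?_⟩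
  calc B * min (1 / 2) (A / (B + 1)) ≤ B * (A / (B + 1)) :=
        mul_le_mul_of_nonneg_left (min_le_right _ _) hB
    _ < A := by rw [mul_div_assoc', div_lt_iff₀ (by linarith)]; nlinarith

noncomputable def pairWeight (n : ℕ) (ε : ℝ) (a : Fin n) : ℝ :=
  if (a : ℕ) = n - 1 then √(1 - ε ^ 2) else ε / √((n : ℝ) - 1)

lemma pairState_eq_sum (n : ℕ) (hn : 2 ≤ n) (ε : ℝ) (p : Fin n × Fin n) :
    pairState n hn ε p = ∑ c, (pairWeight n ε c : ℂ) * if p = (c, c) then 1 else 0 := by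
  obtain ⟨a, b⟩ := p
  simp only [Prod.mk.injEq, mul_ite, mul_one, mul_zero]
  rw [Finset.sum_eq_single a (fun c _ hc => if_neg fun h => hc h.1.symm) (by simp)]
  by_cases hab : a = b
  · subst hab
    by_cases ha : (a : ℕ) = n - 1 <;> simp [pairState, pairWeight, ha, Fin.ext_iff]
  · have : ¬(a = ⟨n - 1, by omega⟩ ∧ b = ⟨n - 1, by omega⟩) := fun h => hab (h.1.trans h.2.symm)
    simp [pairState, hab, Ne.symm hab, this]

lemma sum_comp_pairWeight (n : ℕ) (hn : 1 ≤ n) (ε : ℝ) (g : ℝ → ℝ) :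
    ∑ a, g (pairWeight n ε a) = g √(1 - ε ^ 2) + ((n : ℝ) - 1) * g (ε / √((n : ℝ) - 1)) := by
  obtain ⟨m, rfl⟩ : ∃ m, n = m + 1 := ⟨n - 1, by omega⟩
  rw [Fin.sum_univ_castSucc, add_comm]
  simp [pairWeight, Fin.val_castSucc, Fin.is_lt, Nat.ne_of_lt]

lemma sum_pairWeight (n : ℕ) (hn : 1 ≤ n) (ε : ℝ) :
    ∑ a, pairWeight n ε a = √(1 - ε ^ 2) + √((n : ℝ) - 1) * ε := by
  simpa only [id, mul_div_left_comm, Real.div_sqrt, mul_comm ε] using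
    sum_comp_pairWeight n hn ε id

lemma sum_pairWeight_sq (n : ℕ) (hn : 2 ≤ n) (ε : ℝ) (hε : ε ^ 2 ≤ 1) :
    ∑ a, pairWeight n ε a ^ 2 = 1 := by
  have hn' : (0 : ℝ) < n - 1 := by
    have : (2 : ℝ) ≤ n := by exact_mod_cast hn
    linarith
  rw [sum_comp_pairWeight n (by omega) ε (· ^ 2), div_pow, Real.sq_sqrt (by linarith),
    Real.sq_sqrt hn'.le]
  field_simp
  ring

lemma sum_ofReal_pairWeight_sq (n : ℕ) (hn : 2 ≤ n) (ε : ℝ) (hε : ε ^ 2 ≤ 1) :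
    ∑ a, (pairWeight n ε a : ℂ) ^ 2 = 1 := by
  exact_mod_cast sum_pairWeight_sq n hn ε hε

lemma sum_pairWeight_pow_four (n : ℕ) (hn : 1 ≤ n) (ε : ℝ) (hε : ε ^ 2 ≤ 1) :
    ∑ a, pairWeight n ε a ^ 4 = (1 - ε ^ 2) ^ 2 + ε ^ 4 / ((n : ℝ) - 1) := by
  have hn' : (0 : ℝ) ≤ n - 1 := sub_nonneg.2 (by exact_mod_cast hn)
  rw [sum_comp_pairWeight n hn ε (· ^ 4), div_pow,
    show (4 : ℕ) = 2 * 2 from rfl, pow_mul, pow_mul, pow_mul, Real.sq_sqrt (by linarith),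
    Real.sq_sqrt hn']
  rcases hn'.eq_or_lt with h | h
  · simp [← h]
  · field_simp

def dimerConfig {X : Type*} (ℓ : ℕ) (α : Fin ℓ → X) : Fin (2 * ℓ) → X :=
  fun i => α ⟨i / 2, by omega⟩

lemma dimerConfig_apply_two_mul {X : Type*} {ℓ : ℕ} (α : Fin ℓ → X) (k : Fin ℓ) (i : ℕ)
    (hi : i < 2 * ℓ) (hik : i / 2 = k) : dimerConfig ℓ α ⟨i, hi⟩ = α k :=
  congrArg α (Fin.ext hik)

lemma eq_dimerConfig_iff {X : Type*} (ℓ : ℕ) (α : Fin ℓ → X) (σ : Fin (2 * ℓ) → X) :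
    σ = dimerConfig ℓ α ↔
      ∀ k : Fin ℓ, σ ⟨2 * k, by omega⟩ = α k ∧ σ ⟨2 * k + 1, by omega⟩ = α k := by
  constructor
  · rintro rfl k
    exact ⟨congrArg α (Fin.ext (by simp)), congrArg α (Fin.ext (by simp; omega))⟩
  · intro h
    funext i
    obtain ⟨hi0, hi1⟩ := h ⟨i / 2, by omega⟩
    rcases Nat.even_or_odd' i with ⟨k, hk | hk⟩
    · exact (congrArg σ (Fin.ext (by simp; omega))).trans hi0
    · exact (congrArg σ (Fin.ext (by simp; omega))).trans hi1

lemma dimerState_eq_sum (n ℓ : ℕ) (hn : 2 ≤ n) (ε : ℝ) (σ : Fin (2 * ℓ) → Fin n) :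
    dimerState n ℓ hn ε σ =
      ∑ α : Fin ℓ → Fin n, (∏ k, (pairWeight n ε (α k) : ℂ)) *
        if σ = dimerConfig ℓ α then 1 else 0 := by
  rw [dimerState, ← Fin.prod_univ_eq_prod_range]
  simp only [show ∀ k : Fin ℓ, 2 * (k : ℕ) + 1 < 2 * ℓ by omega, dif_pos, pairState_eq_sum]
  rw [Fintype.prod_sum]
  refine Finset.sum_congr rfl fun α _ => ?_
  rw [Finset.prod_mul_distrib, Fintype.prod_boole]
  simp only [Prod.mk.injEq, eq_dimerConfig_iff]

lemma star_dotProduct_chainH_mulVec (n ℓ : ℕ) (A : Matrix (Fin n × Fin n) (Fin n × Fin n) ℂ)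
    (Φ : (Fin (2 * ℓ) → Fin n) → ℂ) :
    star Φ ⬝ᵥ chainH n ℓ A *ᵥ Φ = ∑ x ∈ Finset.range (2 * ℓ - 1),
      if h : x + 1 < 2 * ℓ then star Φ ⬝ᵥ bondOp n ℓ A ⟨x, by omega⟩ ⟨x + 1, h⟩ *ᵥ Φ else 0 := by
  rw [chainH, sum_mulVec, dotProduct_sum]
  refine Finset.sum_congr rfl fun x _ => ?_
  split_ifs <;> simp

lemma bondOp_dimerConfig_intra (n ℓ : ℕ) (A : Matrix (Fin n × Fin n) (Fin n × Fin n) ℂ)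
    (k : Fin ℓ) (x : ℕ) (hx : x + 1 < 2 * ℓ) (hxk : x = 2 * k) (α β : Fin ℓ → Fin n) :
    bondOp n ℓ A ⟨x, by omega⟩ ⟨x + 1, hx⟩ (dimerConfig ℓ α) (dimerConfig ℓ β) =
      ∏ j, if j = k then A (α j, α j) (β j, β j) else if α j = β j then 1 else 0 := by
  subst hxk
  rw [← Finset.mul_prod_erase _ _ (Finset.mem_univ k), if_pos rfl, bondOp]
  simp only [dimerConfig_apply_two_mul _ k _ _ (by omega : 2 * (k : ℕ) / 2 = k),
    dimerConfig_apply_two_mul _ k _ _ (by omega : (2 * (k : ℕ) + 1) / 2 = k)]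
  congr 1
  rw [Finset.prod_congr rfl fun j hj => if_neg (Finset.ne_of_mem_erase hj), Finset.prod_boole,
    Finset.prod_boole]
  congr 1
  apply propext
  simp only [Finset.mem_erase, Finset.mem_univ, and_true, ne_eq]
  constructor
  · intro h j hj
    have hj' : (j : ℕ) ≠ k := fun e => hj (Fin.ext e)
    have hαβ := h ⟨2 * j, by omega⟩ ⟨by simp [Fin.ext_iff]; omega, by simp [Fin.ext_iff]; omega⟩
    rwa [dimerConfig_apply_two_mul α j _ _ (by omega), dimerConfig_apply_two_mul β j _ _ (by omega)]
      at hαβ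
  · rintro h y ⟨hy1, hy0⟩
    have hy1' : (y : ℕ) ≠ 2 * k + 1 := fun e => hy1 (Fin.ext e)
    have hy0' : (y : ℕ) ≠ 2 * k := fun e => hy0 (Fin.ext e)
    exact h ⟨y / 2, by omega⟩ (by simp [Fin.ext_iff]; omega)

lemma bondOp_dimerConfig_inter (n ℓ : ℕ)
    (A : Matrix (Fin n × Fin n) (Fin n × Fin n) ℂ) (k k' : Fin ℓ) (hk' : (k' : ℕ) = k + 1)
    (x : ℕ) (hx : x + 1 < 2 * ℓ) (hxk : x = 2 * k + 1) (α β : Fin ℓ → Fin n) :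
    bondOp n ℓ A ⟨x, by omega⟩ ⟨x + 1, hx⟩ (dimerConfig ℓ α) (dimerConfig ℓ β) =
      A (α k, α k') (β k, β k') * if α = β then 1 else 0 := by
  subst hxk
  rw [bondOp]
  simp only [dimerConfig_apply_two_mul _ k _ _ (by omega : (2 * (k : ℕ) + 1) / 2 = k),
    dimerConfig_apply_two_mul _ k' _ _ (by omega : (2 * (k : ℕ) + 1 + 1) / 2 = k')]
  congr 1
  rw [Finset.prod_boole]
  congr 1
  apply propext
  simp only [Finset.mem_erase, Finset.mem_univ, and_true, ne_eq]
  constructor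
  · intro h
    funext j
    obtain ⟨i, hi, hij⟩ : ∃ i, i < 2 * ℓ ∧ i / 2 = j ∧ i ≠ 2 * k + 1 ∧ i ≠ 2 * k + 1 + 1 := by
      by_cases hj : (j : ℕ) = k'
      · exact ⟨2 * j + 1, by omega, by omega, by omega, by omega⟩
      · exact ⟨2 * j, by omega, by omega, by omega, by omega⟩
    have hαβ := h ⟨i, hi⟩ ⟨by simp [Fin.ext_iff]; omega, by simp [Fin.ext_iff]; omega⟩
    rwa [dimerConfig_apply_two_mul α j _ _ hij.1, dimerConfig_apply_two_mul β j _ _ hij.1]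
      at hαβ
  · rintro rfl y _
    rfl

section DimerState

variable (n ℓ : ℕ) (hn : 2 ≤ n) (ε : ℝ)

lemma star_dimerState_dotProduct_mulVec
    (M : Matrix (Fin (2 * ℓ) → Fin n) (Fin (2 * ℓ) → Fin n) ℂ) :
    star (dimerState n ℓ hn ε) ⬝ᵥ M *ᵥ dimerState n ℓ hn ε =
      ∑ α, ∑ β, (∏ k, (pairWeight n ε (α k) : ℂ)) * M (dimerConfig ℓ α) (dimerConfig ℓ β) *
        ∏ k, (pairWeight n ε (β k) : ℂ) := by
  rw [star_dotProduct_mulVec_eq_sum_of_eq_sum_ite M (dimerConfig ℓ) _ (dimerState_eq_sum n ℓ hn ε)]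
  simp [star_prod]

variable (A : Matrix (Fin n × Fin n) (Fin n × Fin n) ℂ)

lemma star_dimerState_dotProduct_bondOp_intra (hε : ε ^ 2 ≤ 1) (k : Fin ℓ) (x : ℕ)
    (hx : x + 1 < 2 * ℓ) (hxk : x = 2 * k) :
    star (dimerState n ℓ hn ε) ⬝ᵥ bondOp n ℓ A ⟨x, by omega⟩ ⟨x + 1, hx⟩ *ᵥ dimerState n ℓ hn ε =
      ∑ a, ∑ b, (pairWeight n ε a : ℂ) * A (a, a) (b, b) * pairWeight n ε b := by
  simp only [star_dimerState_dotProduct_mulVec, bondOp_dimerConfig_intra n ℓ A k x hx hxk,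
    ← Finset.prod_mul_distrib]
  rw [sum_sum_prod_eq_prod_sum_sum (fun j a b => (pairWeight n ε a : ℂ) *
    (if j = k then A (a, a) (b, b) else if a = b then 1 else 0) * pairWeight n ε b),
    ← Fintype.prod_ite_eq' k fun _ => ∑ a, ∑ b, (pairWeight n ε a : ℂ) * A (a, a) (b, b) *
    pairWeight n ε b]
  refine Finset.prod_congr rfl fun j _ => ?_
  split_ifs with hj
  · simp
  · simpa [sq] using sum_ofReal_pairWeight_sq n hn ε hε

lemma star_dimerState_dotProduct_bondOp_inter (hε : ε ^ 2 ≤ 1) (k k' : Fin ℓ)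
    (hk' : (k' : ℕ) = k + 1) (x : ℕ) (hx : x + 1 < 2 * ℓ) (hxk : x = 2 * k + 1) :
    star (dimerState n ℓ hn ε) ⬝ᵥ bondOp n ℓ A ⟨x, by omega⟩ ⟨x + 1, hx⟩ *ᵥ dimerState n ℓ hn ε =
      ∑ a, ∑ b, (pairWeight n ε a : ℂ) ^ 2 * (pairWeight n ε b : ℂ) ^ 2 * A (a, b) (a, b) := by
  simp only [star_dimerState_dotProduct_mulVec,
    bondOp_dimerConfig_inter n ℓ A k k' hk' x hx hxk, mul_ite, ite_mul, mul_one,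
    mul_zero, zero_mul, Finset.sum_ite_eq, Finset.mem_univ, if_true]
  rw [← sum_prod_mul_apply_apply _ (sum_ofReal_pairWeight_sq n hn ε hε)
    (fun h => by simp [h] at hk' : k ≠ k')]
  refine Finset.sum_congr rfl fun α _ => ?_
  rw [Finset.prod_pow]
  ring

end DimerState

lemma QOp_apply (n : ℕ) (p q : Fin n × Fin n) :
    QOp n p q = (if p.1 = p.2 then 1 else 0) * (if q.1 = q.2 then 1 else 0) / n := by
  have h : ((√(n : ℝ) : ℂ))⁻¹ * ((√(n : ℝ) : ℂ))⁻¹ = (n : ℂ)⁻¹ := by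
    rw [← mul_inv, ← Complex.ofReal_mul, Real.mul_self_sqrt n.cast_nonneg, Complex.ofReal_natCast]
  by_cases h1 : p.1 = p.2 <;> by_cases h2 : q.1 = q.2 <;>
    simp [QOp, psiVec, h1, h2, h, div_eq_mul_inv]

lemma sum_sum_mul_transOp_QOp_apply_diag (n : ℕ) (u v : ℝ) (w : Fin n → ℂ) :
    ∑ a, ∑ b, w a * ((u : ℂ) • transOp n + (v : ℂ) • QOp n) (a, a) (b, b) * w b =
      u * ∑ a, w a ^ 2 + v / n * (∑ a, w a) ^ 2 := by
  have hentry : ∀ a b, w a * ((u : ℂ) • transOp n + (v : ℂ) • QOp n) (a, a) (b, b) * w b =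
      u * (if a = b then w a ^ 2 else 0) + v / n * (w a * w b) := fun a b => by
    by_cases h : a = b <;> simp [h, transOp, QOp_apply] <;> ring
  simp only [hentry, Finset.sum_add_distrib, ← Finset.mul_sum, Finset.sum_ite_eq,
    Finset.mem_univ, if_true, sq (∑ a, w a), Finset.sum_mul_sum]

lemma sum_sum_mul_transOp_QOp_apply_self (n : ℕ) (u v : ℝ) (c : Fin n → ℂ) :
    ∑ a, ∑ b, c a * c b * ((u : ℂ) • transOp n + (v : ℂ) • QOp n) (a, b) (a, b) =
      (u + v / n) * ∑ a, c a ^ 2 := by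
  have hentry : ∀ a b, c a * c b * ((u : ℂ) • transOp n + (v : ℂ) • QOp n) (a, b) (a, b) =
      if a = b then (u + v / n) * c a ^ 2 else 0 := fun a b => by
    by_cases h : a = b
    · subst h
      simp [transOp, QOp_apply]
      ring
    · simp [h, transOp, QOp_apply, Ne.symm h]
  simp only [hentry, Finset.sum_ite_eq, Finset.mem_univ, if_true, Finset.mul_sum]

section Energy

variable (n ℓ : ℕ) (hn : 2 ≤ n) (ε u v : ℝ)

lemma dimerState_energy_intra_bond (hε : ε ^ 2 ≤ 1) (k : Fin ℓ) (x : ℕ) (hx : x + 1 < 2 * ℓ)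
    (hxk : x = 2 * k) :
    star (dimerState n ℓ hn ε) ⬝ᵥ bondOp n ℓ ((u : ℂ) • transOp n + (v : ℂ) • QOp n)
        ⟨x, by omega⟩ ⟨x + 1, hx⟩ *ᵥ dimerState n ℓ hn ε =
      ((u + v / n * (√(1 - ε ^ 2) + √((n : ℝ) - 1) * ε) ^ 2 : ℝ) : ℂ) := by
  rw [star_dimerState_dotProduct_bondOp_intra n ℓ hn ε _ hε k x hx hxk,
    sum_sum_mul_transOp_QOp_apply_diag, sum_ofReal_pairWeight_sq n hn ε hε, ← Complex.ofReal_sum,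
    sum_pairWeight n (by omega) ε]
  push_cast
  ring

lemma dimerState_energy_inter_bond (hε : ε ^ 2 ≤ 1) (k k' : Fin ℓ) (hk' : (k' : ℕ) = k + 1)
    (x : ℕ) (hx : x + 1 < 2 * ℓ) (hxk : x = 2 * k + 1) :
    star (dimerState n ℓ hn ε) ⬝ᵥ bondOp n ℓ ((u : ℂ) • transOp n + (v : ℂ) • QOp n)
        ⟨x, by omega⟩ ⟨x + 1, hx⟩ *ᵥ dimerState n ℓ hn ε =
      (((u + v / n) * ((1 - ε ^ 2) ^ 2 + ε ^ 4 / ((n : ℝ) - 1)) : ℝ) : ℂ) := by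
  rw [star_dimerState_dotProduct_bondOp_inter n ℓ hn ε _ hε k k' hk' x hx hxk,
    sum_sum_mul_transOp_QOp_apply_self]
  have hfour : ∑ a, ((pairWeight n ε a : ℂ) ^ 2) ^ 2 =
      (((1 - ε ^ 2) ^ 2 + ε ^ 4 / ((n : ℝ) - 1) : ℝ) : ℂ) := by
    rw [← sum_pairWeight_pow_four n (by omega) ε hε]
    push_cast
    simp only [← pow_mul]
  rw [hfour]
  push_cast
  ring

end Energy

lemma dimerState_energy (n ℓ : ℕ) (hn : 2 ≤ n) (hℓ : 1 ≤ ℓ) (ε u v : ℝ) (hε : ε ^ 2 ≤ 1) :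
    star (dimerState n ℓ hn ε) ⬝ᵥ chainH n ℓ ((u : ℂ) • transOp n + (v : ℂ) • QOp n) *ᵥ
        dimerState n ℓ hn ε =
      ((ℓ * (u + v / n * (√(1 - ε ^ 2) + √((n : ℝ) - 1) * ε) ^ 2) +
        (ℓ - 1) * ((u + v / n) * ((1 - ε ^ 2) ^ 2 + ε ^ 4 / ((n : ℝ) - 1))) : ℝ) : ℂ) := by
  rw [star_dotProduct_chainH_mulVec]
  have hbond : ∀ x ∈ Finset.range (2 * ℓ - 1),
      (if h : x + 1 < 2 * ℓ then star (dimerState n ℓ hn ε) ⬝ᵥ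
        bondOp n ℓ ((u : ℂ) • transOp n + (v : ℂ) • QOp n) ⟨x, by omega⟩ ⟨x + 1, h⟩ *ᵥ
          dimerState n ℓ hn ε else 0) =
      if x % 2 = 0 then ((u + v / n * (√(1 - ε ^ 2) + √((n : ℝ) - 1) * ε) ^ 2 : ℝ) : ℂ)
      else (((u + v / n) * ((1 - ε ^ 2) ^ 2 + ε ^ 4 / ((n : ℝ) - 1)) : ℝ) : ℂ) := by
    intro x hx
    have hx' : x + 1 < 2 * ℓ := by simp at hx; omega
    rw [dif_pos hx']
    split_ifs with hpar
    · exact dimerState_energy_intra_bond n ℓ hn ε u v hε ⟨x / 2, by omega⟩ x hx' (by simp; omega)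
    · exact dimerState_energy_inter_bond n ℓ hn ε u v hε ⟨x / 2, by omega⟩ ⟨x / 2 + 1, by omega⟩ rfl
        x hx' (by simp; omega)
  obtain ⟨m, rfl⟩ : ∃ m, ℓ = m + 1 := ⟨ℓ - 1, by omega⟩
  rw [Finset.sum_congr rfl hbond, show 2 * (m + 1) - 1 = 2 * m + 1 by omega,
    sum_range_ite_mod_two]
  push_cast
  ring

lemma exists_dimer_energy_lt (n ℓ : ℕ) (hn : 2 ≤ n) (hℓ : 1 ≤ ℓ) (u v : ℝ) (hv : v < 0) :
    ∃ ε : ℝ, 0 < ε ∧ ε < 1 ∧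
      ℓ * (u + v / n * (√(1 - ε ^ 2) + √((n : ℝ) - 1) * ε) ^ 2) +
        (ℓ - 1) * ((u + v / n) * ((1 - ε ^ 2) ^ 2 + ε ^ 4 / ((n : ℝ) - 1))) <
      (2 * ℓ - 1) * (u + v / n) := by
  have hn' : (2 : ℝ) ≤ n := by exact_mod_cast hn
  have hℓ' : (1 : ℝ) ≤ ℓ := by exact_mod_cast hℓ
  set a := √((n : ℝ) - 1)
  have ha0 : 0 ≤ a := Real.sqrt_nonneg _
  have ha : a ^ 2 = n - 1 := Real.sq_sqrt (by linarith)
  have hvn : v / n < 0 := div_neg_of_neg_of_pos hv (by linarith)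
  obtain ⟨ε, hε0, hε_half, hε_small⟩ := exists_pos_le_half_mul_lt
    (A := ℓ * (-(v / n)) * a) (mul_pos (mul_pos (by linarith) (by linarith)) (by nlinarith))
    (B := 2 * ((ℓ - 1) * |u + v / n|)) (by have := abs_nonneg (u + v / n); nlinarith)
  have hε : ε ^ 2 ≤ 1 := by nlinarith
  refine ⟨ε, hε0, by linarith, ?_⟩
  have hintra := one_add_mul_le_sq_sqrt_one_sub_sq_add hε0.le hε_half ha0 (by linarith)
  have hinter := abs_sq_one_sub_sq_add_div_sub_one_le hε (by linarith : (1 : ℝ) ≤ n - 1)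
  have hloss : (u + v / n) * ((1 - ε ^ 2) ^ 2 + ε ^ 4 / ((n : ℝ) - 1) - 1) ≤
      |u + v / n| * (2 * ε ^ 2) :=
    (le_abs_self _).trans (by rw [abs_mul]; exact mul_le_mul_of_nonneg_left hinter (abs_nonneg _))
  linarith [mul_le_mul_of_nonneg_left (mul_le_mul_of_nonpos_left hintra hvn.le)
    (by linarith : (0 : ℝ) ≤ ℓ), mul_le_mul_of_nonneg_left hloss (by linarith : (0 : ℝ) ≤ ℓ - 1),
    mul_lt_mul_of_pos_right hε_small hε0]

/-- For `v < 0` there is `ε ∈ (0,1)` such that the dimerized state `Φ_ε` has energy strictly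
below `(2ℓ-1)(u + v/n)`, the optimal product-state energy. -/
theorem dimerized_state_beats_product_states (n ℓ : ℕ) (hn : 2 ≤ n) (hℓ : 1 ≤ ℓ)
    (u v : ℝ) (hv : v < 0) :
    ∃ ε : ℝ, 0 < ε ∧ ε < 1 ∧
      (star (dimerState n ℓ hn ε) ⬝ᵥ
          (chainH n ℓ ((u : ℂ) • transOp n + (v : ℂ) • QOp n) *ᵥ dimerState n ℓ hn ε)).re
        < ((2 * ℓ - 1 : ℕ) : ℝ) * (u + v / n) := by
  obtain ⟨ε, hε0, hε1, hlt⟩ := exists_dimer_energy_lt n ℓ hn hℓ u v hv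
  refine ⟨ε, hε0, hε1, ?_⟩
  rw [dimerState_energy n ℓ hn hℓ ε u v (by nlinarith), Complex.ofReal_re,
    Nat.cast_sub (by omega : 1 ≤ 2 * ℓ)]
  push_cast
  exact hlt
end
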